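/- arXiv:1512.05116 — 6 statements merged into one kernel-verified Lean document; each statement's English description precedes it below -/
import Mathlib

section
/- If a trajectory of the point-vortex system returns to a state similar to its initial state with scale factor of modulus different from 1, then the angular momentum of the circulations vanishes: if t ↦ z(t) is a trajectory defined on an interval containing 0 and t₁, and there exist a, b ∈ ℂ with |a| ≠ 1 such that z_k(t₁) = a z_k(0) + b for all k, then L = Σ_{i<j} Γ_i Γ_j = 0. In particular, if a collapsing (self-similar, shrinking) configuration exists for the circulations Γ, then L = 0. -/
/-!
The Kirchhoff–Routh function `H(z) = Σ_{i<j} Γ_i Γ_j log |z_i - z_j|` is conserved along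
trajectories: writing `u_k = Σ_{l≠k} Γ_l / (z_k - z_l)`, the equations of motion read
`ż_k = (i/2π) conj u_k`, so `dH/dt = Re Σ_k Γ_k ż_k u_k = Re ((i/2π) Σ_k Γ_k |u_k|²) = 0`.
A similarity `z ↦ a z + b` changes `H` by `L log |a|`, so a similar return forces
`L log |a| = 0`.
-/

/-- The velocity of the `k`-th vortex of a system of `n` point vortices at positions
`z : Fin n → ℂ` with circulations `Γ : Fin n → ℝ`:
`V_k(z) = (i/(2π)) Σ_{l≠k} Γ_l (z_k − z_l)/|z_k − z_l|²`. -/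
noncomputable def vortexVelocity (n : ℕ) (Γ : Fin n → ℝ) (z : Fin n → ℂ) (k : Fin n) : ℂ :=
  (Complex.I / (2 * Real.pi)) *
    ∑ l ∈ Finset.univ.filter (fun l => l ≠ k),
      (Γ l : ℂ) * (z k - z l) / ((‖z k - z l‖ ^ 2 : ℝ) : ℂ)

open Finset ComplexConjugate

theorem sum_filter_lt_add_swap {ι M : Type*} [Fintype ι] [LinearOrder ι] [AddCommMonoid M]
    (f : ι → ι → M) :
    ∑ i, ∑ j ∈ univ.filter (fun j => i < j), (f i j + f j i) =
      ∑ i, ∑ j ∈ univ.filter (fun j => j ≠ i), f i j := by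
  simp only [sum_filter, sum_add_distrib]
  rw [sum_comm (f := fun i j => if i < j then f j i else 0), ← sum_add_distrib]
  refine sum_congr rfl fun i _ => ?_
  rw [← sum_add_distrib]
  refine sum_congr rfl fun j _ => ?_
  rcases lt_trichotomy i j with h | rfl | h
  · simp [h, h.not_gt, h.ne']
  · simp
  · simp [h, h.not_gt, h.ne]

theorem Complex.div_ofReal_norm_sq (w : ℂ) : w / ((‖w‖ ^ 2 : ℝ) : ℂ) = (conj w)⁻¹ := by
  rw [Complex.inv_def, Complex.conj_conj, Complex.normSq_conj, Complex.normSq_eq_norm_sq,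
    div_eq_mul_inv, Complex.ofReal_inv]

-- Also valid at collisions `z k = z l`: both sides then have a zero term, by `0 / 0 = 0 = 0⁻¹`.
theorem vortexVelocity_eq_conj (n : ℕ) (Γ : Fin n → ℝ) (z : Fin n → ℂ) (k : Fin n) :
    vortexVelocity n Γ z k = (Complex.I / (2 * Real.pi)) *
      conj (∑ l ∈ univ.filter (fun l => l ≠ k), (Γ l : ℂ) * (z k - z l)⁻¹) := by
  simp only [vortexVelocity, map_sum, map_mul, map_inv₀, Complex.conj_ofReal, mul_div_assoc,
    Complex.div_ofReal_norm_sq]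

theorem sum_lt_mul_re_vortexVelocity_sub_div_eq_zero (n : ℕ) (Γ : Fin n → ℝ) (z : Fin n → ℂ) :
    ∑ i, ∑ j ∈ univ.filter (fun j => i < j),
      Γ i * Γ j * ((vortexVelocity n Γ z i - vortexVelocity n Γ z j) / (z i - z j)).re = 0 := by
  set V := vortexVelocity n Γ z
  set u : Fin n → ℂ := fun k => ∑ l ∈ univ.filter (fun l => l ≠ k), (Γ l : ℂ) * (z k - z l)⁻¹
  have hpair : ∀ i j, ((Γ i * Γ j : ℝ) : ℂ) * ((V i - V j) / (z i - z j)) =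
      Γ i * V i * (Γ j * (z i - z j)⁻¹) + Γ j * V j * (Γ i * (z j - z i)⁻¹) := by
    intro i j
    rw [← neg_sub (z i), inv_neg, div_eq_mul_inv]
    push_cast; ring
  have hV : ∀ k, V k = Complex.I / (2 * Real.pi) * conj (u k) :=
    fun k => vortexVelocity_eq_conj n Γ z k
  have hdiag : ∀ i, ∑ j ∈ univ.filter (fun j => j ≠ i), Γ i * V i * (Γ j * (z i - z j)⁻¹) =
      Complex.I / (2 * Real.pi) * ((Γ i * Complex.normSq (u i) : ℝ) : ℂ) := by
    intro i
    rw [← mul_sum, hV, Complex.ofReal_mul, ← Complex.mul_conj]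
    ring
  calc ∑ i, ∑ j ∈ univ.filter (fun j => i < j), Γ i * Γ j * ((V i - V j) / (z i - z j)).re
      = (∑ i, ∑ j ∈ univ.filter (fun j => i < j),
          ((Γ i * Γ j : ℝ) : ℂ) * ((V i - V j) / (z i - z j))).re := by
        simp only [Complex.re_sum, Complex.re_ofReal_mul]
    _ = (∑ i, ∑ j ∈ univ.filter (fun j => j ≠ i), Γ i * V i * (Γ j * (z i - z j)⁻¹)).re := by
        simp only [hpair, sum_filter_lt_add_swap]
    _ = 0 := by
        simp [hdiag, Complex.div_re, Complex.mul_re]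

theorem HasDerivAt.log_norm {g : ℝ → ℂ} {g' : ℂ} {t : ℝ} (hg : HasDerivAt g g' t)
    (hne : g t ≠ 0) : HasDerivAt (fun τ => Real.log ‖g τ‖) (g' / g t).re t := by
  have hsq : HasDerivAt (fun τ => Real.log (‖g τ‖ ^ 2)) (2 * (g' / g t).re) t := by
    convert hg.norm_sq.log (by positivity) using 1
    rw [Complex.inner, div_eq_mul_inv, Complex.inv_def, Complex.normSq_eq_norm_sq]
    simp only [← mul_assoc, Complex.re_mul_ofReal]
    field_simp
  have hhalf : (fun τ => Real.log ‖g τ‖) = fun τ => 1 / 2 * Real.log (‖g τ‖ ^ 2) := by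
    ext τ; rw [Real.log_pow]; push_cast; ring
  rw [hhalf]
  exact (hsq.const_mul (1 / 2 : ℝ)).congr_deriv (by ring)

noncomputable def angularMomentum {n : ℕ} (Γ : Fin n → ℝ) : ℝ :=
  ∑ i, ∑ j ∈ univ.filter (fun j => i < j), Γ i * Γ j

noncomputable def vortexHamiltonian {n : ℕ} (Γ : Fin n → ℝ) (w : Fin n → ℂ) : ℝ :=
  ∑ i, ∑ j ∈ univ.filter (fun j => i < j), Γ i * Γ j * Real.log ‖w i - w j‖

theorem hasDerivAt_vortexHamiltonian {n : ℕ} {Γ : Fin n → ℝ} {z : ℝ → Fin n → ℂ} {t : ℝ}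
    (hinj : Function.Injective (z t))
    (hderiv : ∀ k, HasDerivAt (fun τ => z τ k) (vortexVelocity n Γ (z t) k) t) :
    HasDerivAt (fun τ => vortexHamiltonian Γ (z τ)) 0 t := by
  rw [← sum_lt_mul_re_vortexVelocity_sub_div_eq_zero n Γ (z t)]
  refine HasDerivAt.fun_sum fun i _ => HasDerivAt.fun_sum fun j hj => ?_
  have hne : z t i - z t j ≠ 0 :=
    sub_ne_zero.2 <| hinj.ne (mem_filter.1 hj).2.ne
  exact (((hderiv i).sub (hderiv j)).log_norm hne).const_mul (Γ i * Γ j)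

theorem vortexHamiltonian_affine {n : ℕ} (Γ : Fin n → ℝ) {w : Fin n → ℂ}
    (hw : Function.Injective w) {a : ℂ} (ha : a ≠ 0) (b : ℂ) :
    vortexHamiltonian Γ (fun k => a * w k + b) =
      angularMomentum Γ * Real.log ‖a‖ + vortexHamiltonian Γ w := by
  simp only [vortexHamiltonian, angularMomentum, sum_mul, ← sum_add_distrib]
  refine sum_congr rfl fun i _ => sum_congr rfl fun j hj => ?_
  have hne : w i - w j ≠ 0 := sub_ne_zero.2 <| hw.ne (mem_filter.1 hj).2.ne
  rw [add_sub_add_right_eq_sub, ← mul_sub, norm_mul,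
    Real.log_mul (norm_ne_zero_iff.2 ha) (norm_ne_zero_iff.2 hne)]
  ring

theorem angular_momentum_eq_zero_of_similar_return_general
    (n : ℕ) (Γ : Fin n → ℝ)
    (s : Set ℝ) (hs : s.OrdConnected)
    (z : ℝ → Fin n → ℂ)
    (hinj : ∀ t ∈ s, Function.Injective (z t))
    (hderiv : ∀ t ∈ s, ∀ k, HasDerivAt (fun τ => z τ k) (vortexVelocity n Γ (z t) k) t)
    (t₁ : ℝ) (h0 : (0 : ℝ) ∈ s) (ht₁ : t₁ ∈ s)
    (a b : ℂ) (ha : ‖a‖ ≠ 1)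
    (hsim : ∀ k, z t₁ k = a * z 0 k + b) :
    ∑ i, ∑ j ∈ Finset.univ.filter (fun j => i < j), Γ i * Γ j = 0 := by
  obtain rfl | ha0 := eq_or_ne a 0
  · refine sum_eq_zero fun i _ => sum_eq_zero fun j hj => absurd ?_ (mem_filter.1 hj).2.ne
    exact hinj t₁ ht₁ (by simp [hsim])
  have hconst : vortexHamiltonian Γ (z t₁) = vortexHamiltonian Γ (z 0) := by
    have := hs.convex.norm_image_sub_le_of_norm_hasDerivWithin_le
      (fun t ht => (hasDerivAt_vortexHamiltonian (hinj t ht) (hderiv t ht)).hasDerivWithinAt)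
      (fun _ _ => norm_zero.le) h0 ht₁
    simpa [sub_eq_zero] using this
  have hscale := vortexHamiltonian_affine Γ (hinj 0 h0) ha0 b
  rw [← funext hsim, hconst, eq_comm, add_eq_right, mul_eq_zero] at hscale
  exact hscale.resolve_right <|
    Real.log_ne_zero_of_pos_of_ne_one (norm_pos_iff.2 ha0) ha

/-- If a trajectory returns to a state similar to its initial state with scale factor of
modulus different from 1, then the angular momentum `L = Σ_{i<j} Γ_i Γ_j` vanishes. -/
theorem angular_momentum_eq_zero_of_similar_return
    (n : ℕ) (Γ : Fin n → ℝ) (hΓ : ∀ k, Γ k ≠ 0)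
    (s : Set ℝ) (hs : s.OrdConnected)
    (z : ℝ → Fin n → ℂ)
    (hinj : ∀ t ∈ s, Function.Injective (z t))
    (hderiv : ∀ t ∈ s, ∀ k, HasDerivAt (fun τ => z τ k) (vortexVelocity n Γ (z t) k) t)
    (t₁ : ℝ) (h0 : (0 : ℝ) ∈ s) (ht₁ : t₁ ∈ s)
    (a b : ℂ) (ha : ‖a‖ ≠ 1)
    (hsim : ∀ k, z t₁ k = a * z 0 k + b) :
    ∑ i, ∑ j ∈ Finset.univ.filter (fun j => i < j), Γ i * Γ j = 0 :=
  angular_momentum_eq_zero_of_similar_return_general n Γ s hs z hinj hderiv t₁ h0 ht₁ a b ha hsim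
end

section
/- Rotational configurations rotate rigidly: if w ∈ ℂ^n has pairwise distinct components and V_k(w) = iλ (w_k − p) for all k, where λ ∈ ℝ, λ ≠ 0, p ∈ ℂ, then the curve z_k(t) = p + e^{iλt}(w_k − p) is a trajectory of the point-vortex system for all t ∈ ℝ, with z(0) = w. -/
/-! The velocity field is equivariant under rotations about any centre `p`; since a rotational
configuration moves with velocity `iλ(w_k − p)`, the rigidly rotated configuration
`p + e^{iλt}(w − p)` has velocity `e^{iλt} · iλ(w_k − p)`, which is exactly the time derivative
of the rotating curve. -/

theorem vortexVelocity_rotate (n : ℕ) (Γ : Fin n → ℝ) (z : Fin n → ℂ) (k : Fin n) (p u : ℂ)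
    (hu : ‖u‖ = 1) :
    vortexVelocity n Γ (fun j => p + u * (z j - p)) k = u * vortexVelocity n Γ z k := by
  simp only [vortexVelocity, Finset.mul_sum]
  refine Finset.sum_congr rfl fun l _ => ?_
  have hdiff : p + u * (z k - p) - (p + u * (z l - p)) = u * (z k - z l) := by ring
  rw [hdiff, norm_mul, hu, one_mul]
  ring

theorem norm_exp_I_mul_ofReal_mul_ofReal (a t : ℝ) : ‖Complex.exp (Complex.I * a * t)‖ = 1 := by
  rw [show Complex.I * a * t = ((a * t : ℝ) : ℂ) * Complex.I by push_cast; ring]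
  exact Complex.norm_exp_ofReal_mul_I _

theorem hasDerivAt_add_exp_mul_ofReal_mul (p c a : ℂ) (t : ℝ) :
    HasDerivAt (fun τ : ℝ => p + Complex.exp (c * τ) * a) (Complex.exp (c * t) * (c * a)) t := by
  have hlin : HasDerivAt (fun τ : ℝ => c * (τ : ℂ)) c t := by
    simpa using Complex.ofRealCLM.hasDerivAt.const_mul c
  exact ((hlin.cexp.mul_const a).const_add p).congr_deriv (mul_assoc _ _ _)

theorem rotational_configuration_trajectory_general
    (n : ℕ) (Γ : Fin n → ℝ)
    (w : Fin n → ℂ) (hw : Function.Injective w)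
    (lam : ℝ) (p : ℂ)
    (hv : ∀ k, vortexVelocity n Γ w k = Complex.I * lam * (w k - p)) :
    (∀ t : ℝ, Function.Injective
        (fun k => p + Complex.exp (Complex.I * lam * t) * (w k - p))) ∧
    (∀ t : ℝ, ∀ k, HasDerivAt
        (fun τ : ℝ => p + Complex.exp (Complex.I * lam * τ) * (w k - p))
        (vortexVelocity n Γ (fun j => p + Complex.exp (Complex.I * lam * t) * (w j - p)) k)
        t) ∧
    (fun k => p + Complex.exp (Complex.I * lam * (0 : ℝ)) * (w k - p)) = w := by
  refine ⟨fun t => ?_, fun t k => ?_, by simp⟩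
  · have hrot : Function.Injective fun x : ℂ => p + Complex.exp (Complex.I * lam * t) * (x - p) :=
      fun x y hxy => by simpa [Complex.exp_ne_zero] using hxy
    exact hrot.comp hw
  · rw [vortexVelocity_rotate n Γ w k p _ (norm_exp_I_mul_ofReal_mul_ofReal lam t), hv k]
    exact hasDerivAt_add_exp_mul_ofReal_mul p _ _ t

/-- Rotational configurations rotate rigidly: if `V_k(w) = iλ(w_k − p)` with `λ ≠ 0`, then
`z_k(t) = p + e^{iλt}(w_k − p)` is a trajectory with `z(0) = w`. -/
theorem rotational_configuration_trajectory
    (n : ℕ) (Γ : Fin n → ℝ) (hΓ : ∀ k, Γ k ≠ 0)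
    (w : Fin n → ℂ) (hw : Function.Injective w)
    (lam : ℝ) (hlam : lam ≠ 0) (p : ℂ)
    (hv : ∀ k, vortexVelocity n Γ w k = Complex.I * lam * (w k - p)) :
    (∀ t : ℝ, Function.Injective
        (fun k => p + Complex.exp (Complex.I * lam * t) * (w k - p))) ∧
    (∀ t : ℝ, ∀ k, HasDerivAt
        (fun τ : ℝ => p + Complex.exp (Complex.I * lam * τ) * (w k - p))
        (vortexVelocity n Γ (fun j => p + Complex.exp (Complex.I * lam * t) * (w j - p)) k)
        t) ∧
    (fun k => p + Complex.exp (Complex.I * lam * (0 : ℝ)) * (w k - p)) = w :=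
  rotational_configuration_trajectory_general n Γ w hw lam p hv
end

section
/- Collapsing configurations evolve self-similarly and collapse to a point in finite time: let w ∈ ℂ^n have pairwise distinct components and suppose V_k(w) = ω (w_k − p) for all k, where ω, p ∈ ℂ with Re(ω) < 0. Set t₀ = −1/(2 Re(ω)) > 0 and, for t ∈ (−∞, t₀), define z_k(t) = p + √(2 Re(ω) t + 1) · exp(i (Im(ω)/(2 Re(ω))) ln(2 Re(ω) t + 1)) · (w_k − p). Then t ↦ z(t) is a trajectory of the point-vortex system on (−∞, t₀) with z(0) = w, and |z_k(t) − p| → 0 as t → t₀ from below, for every k. -/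
open Complex Filter Topology

theorem vortexVelocity_homothety {n : ℕ} (Γ : Fin n → ℝ) (z : Fin n → ℂ) (p c : ℂ) (k : Fin n) :
    vortexVelocity n Γ (fun l => p + c * (z l - p)) k =
      (starRingEnd ℂ c)⁻¹ * vortexVelocity n Γ z k := by
  unfold vortexVelocity
  simp only [Finset.mul_sum]
  refine Finset.sum_congr rfl fun l _ => ?_
  rw [show p + c * (z k - p) - (p + c * (z l - p)) = c * (z k - z l) by ring, norm_mul,
    inv_def, conj_conj, normSq_conj, normSq_eq_norm_sq]
  push_cast
  ring

theorem injective_homothety {n : ℕ} {w : Fin n → ℂ} (hw : Function.Injective w) (p : ℂ)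
    {c : ℂ} (hc : c ≠ 0) : Function.Injective fun l => p + c * (w l - p) := fun _ _ hkl =>
  hw (sub_left_injective (mul_left_cancel₀ hc (add_left_cancel hkl)))

theorem hasDerivAt_homothety {n : ℕ} {Γ : Fin n → ℝ} {w : Fin n → ℂ} {ω p : ℂ} {k : Fin n}
    (hv : vortexVelocity n Γ w k = ω * (w k - p)) {f : ℝ → ℂ} {t : ℝ}
    (hf : HasDerivAt f ((starRingEnd ℂ (f t))⁻¹ * ω) t) :
    HasDerivAt (fun τ => p + f τ * (w k - p))
      (vortexVelocity n Γ (fun l => p + f t * (w l - p)) k) t := by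
  rw [vortexVelocity_homothety, hv, ← mul_assoc]
  exact (hf.mul_const _).const_add p

noncomputable def collapseFactor (ω : ℂ) (t : ℝ) : ℂ :=
  (Real.sqrt (2 * ω.re * t + 1) : ℂ)
    * Complex.exp (Complex.I * ((ω.im / (2 * ω.re) : ℝ) : ℂ)
      * ((Real.log (2 * ω.re * t + 1) : ℝ) : ℂ))

section collapseFactor

variable {ω : ℂ}

@[simp]
theorem collapseFactor_zero : collapseFactor ω 0 = 1 := by
  simp [collapseFactor]

theorem norm_collapseFactor (t : ℝ) :
    ‖collapseFactor ω t‖ = Real.sqrt (2 * ω.re * t + 1) := by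
  have h : ∀ x y : ℝ, I * x * y = ((x * y : ℝ) : ℂ) * I := fun x y => by push_cast; ring
  rw [collapseFactor, norm_mul, norm_real, Real.norm_of_nonneg (Real.sqrt_nonneg _), h,
    norm_exp_ofReal_mul_I, mul_one]

theorem collapseFactor_ne_zero {t : ℝ} (ht : 0 < 2 * ω.re * t + 1) : collapseFactor ω t ≠ 0 := by
  rw [← norm_pos_iff, norm_collapseFactor]
  exact Real.sqrt_pos.2 ht

theorem hasDerivAt_collapseFactor (hω : ω.re ≠ 0) {t : ℝ} (ht : 0 < 2 * ω.re * t + 1) :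
    HasDerivAt (collapseFactor ω) ((starRingEnd ℂ (collapseFactor ω t))⁻¹ * ω) t := by
  have hs : HasDerivAt (fun τ => 2 * ω.re * τ + 1) (2 * ω.re) t := by
    simpa using ((hasDerivAt_id t).const_mul (2 * ω.re)).add_const 1
  have hsqrt := (hs.sqrt ht.ne').ofReal_comp
  have hexp := (((hs.log ht.ne').ofReal_comp).const_mul (I * ((ω.im / (2 * ω.re) : ℝ) : ℂ))).cexp
  refine (hsqrt.mul hexp).congr_deriv ?_
  rw [collapseFactor, map_mul, conj_ofReal]
  set r := Real.sqrt (2 * ω.re * t + 1)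
  set E := cexp (I * ((ω.im / (2 * ω.re) : ℝ) : ℂ) * ((Real.log (2 * ω.re * t + 1) : ℝ) : ℂ))
  have hr : (r : ℂ) ≠ 0 := ofReal_ne_zero.2 (Real.sqrt_pos.2 ht).ne'
  have hE : E ≠ 0 := exp_ne_zero _
  have hr2 : (2 * ω.re * t + 1 : ℂ) = r ^ 2 := by exact_mod_cast (Real.sq_sqrt ht.le).symm
  have hconjE : starRingEnd ℂ E = E⁻¹ := by
    rw [← exp_conj, ← exp_neg, map_mul, map_mul, conj_I, conj_ofReal, conj_ofReal, neg_mul, neg_mul]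
  have hωre : (ω.re : ℂ) ≠ 0 := ofReal_ne_zero.2 hω
  rw [hconjE]
  push_cast
  rw [hr2]
  field_simp
  linear_combination re_add_im ω

theorem tendsto_collapseFactor (hω : ω.re ≠ 0) :
    Tendsto (fun t => ‖collapseFactor ω t‖) (𝓝 (-1 / (2 * ω.re))) (𝓝 0) := by
  have hcont : Continuous fun t : ℝ => Real.sqrt (2 * ω.re * t + 1) := by fun_prop
  simpa [norm_collapseFactor, hω, mul_div_cancel₀] using hcont.tendsto (-1 / (2 * ω.re))

end collapseFactor

theorem collapsing_configuration_trajectory_general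
    (n : ℕ) (Γ : Fin n → ℝ)
    (w : Fin n → ℂ) (hw : Function.Injective w)
    (ω p : ℂ) (hre : ω.re < 0)
    (hv : ∀ k, vortexVelocity n Γ w k = ω * (w k - p))
    (t₀ : ℝ) (ht₀ : t₀ = -1 / (2 * ω.re))
    (z : ℝ → Fin n → ℂ)
    (hz : ∀ t k, z t k = p + (Real.sqrt (2 * ω.re * t + 1) : ℂ)
        * Complex.exp (Complex.I * ((ω.im / (2 * ω.re) : ℝ) : ℂ)
            * ((Real.log (2 * ω.re * t + 1) : ℝ) : ℂ))
        * (w k - p)) :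
    0 < t₀ ∧
    (∀ t ∈ Set.Iio t₀, Function.Injective (z t)) ∧
    (∀ t ∈ Set.Iio t₀, ∀ k,
        HasDerivAt (fun τ => z τ k) (vortexVelocity n Γ (z t) k) t) ∧
    z 0 = w ∧
    (∀ k, Filter.Tendsto (fun t => ‖z t k - p‖) (nhdsWithin t₀ (Set.Iio t₀))
        (nhds 0)) := by
  obtain rfl : z = fun t k => p + collapseFactor ω t * (w k - p) := funext₂ hz
  have hre' : ω.re ≠ 0 := hre.ne
  have hpos : ∀ t < t₀, 0 < 2 * ω.re * t + 1 := fun t ht => by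
    rw [ht₀, lt_div_iff_of_neg (by linarith)] at ht
    linarith
  refine ⟨ht₀ ▸ div_pos_of_neg_of_neg (by norm_num) (by linarith),
    fun t ht => injective_homothety hw p (collapseFactor_ne_zero (hpos t ht)),
    fun t ht k => hasDerivAt_homothety (hv k) (hasDerivAt_collapseFactor hre' (hpos t ht)),
    by simp, fun k => ?_⟩
  simp only [add_sub_cancel_left, norm_mul]
  subst ht₀
  simpa using ((tendsto_collapseFactor hre').mul_const ‖w k - p‖).mono_left nhdsWithin_le_nhds

/-- Collapsing configurations evolve self-similarly and collapse to a point in finite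
time: if `V_k(w) = ω(w_k − p)` with `Re ω < 0`, `t₀ = −1/(2 Re ω) > 0`, and
`z_k(t) = p + √(2 Re(ω) t + 1) exp(i (Im ω/(2 Re ω)) ln(2 Re(ω) t + 1)) (w_k − p)`,
then `z` is a trajectory on `(−∞, t₀)` with `z(0) = w` and `|z_k(t) − p| → 0` as
`t → t₀⁻`. -/
theorem collapsing_configuration_trajectory
    (n : ℕ) (Γ : Fin n → ℝ) (hΓ : ∀ k, Γ k ≠ 0)
    (w : Fin n → ℂ) (hw : Function.Injective w)
    (ω p : ℂ) (hre : ω.re < 0)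
    (hv : ∀ k, vortexVelocity n Γ w k = ω * (w k - p))
    (t₀ : ℝ) (ht₀ : t₀ = -1 / (2 * ω.re))
    (z : ℝ → Fin n → ℂ)
    (hz : ∀ t k, z t k = p + (Real.sqrt (2 * ω.re * t + 1) : ℂ)
        * Complex.exp (Complex.I * ((ω.im / (2 * ω.re) : ℝ) : ℂ)
            * ((Real.log (2 * ω.re * t + 1) : ℝ) : ℂ))
        * (w k - p)) :
    0 < t₀ ∧
    (∀ t ∈ Set.Iio t₀, Function.Injective (z t)) ∧
    (∀ t ∈ Set.Iio t₀, ∀ k,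
        HasDerivAt (fun τ => z τ k) (vortexVelocity n Γ (z t) k) t) ∧
    z 0 = w ∧
    (∀ k, Filter.Tendsto (fun t => ‖z t k - p‖) (nhdsWithin t₀ (Set.Iio t₀))
        (nhds 0)) :=
  collapsing_configuration_trajectory_general n Γ w hw ω p hre hv t₀ ht₀ z hz
end

section
/- Expanding configurations evolve self-similarly for all positive time: let w ∈ ℂ^n have pairwise distinct components and suppose V_k(w) = ω (w_k − p) for all k, where ω, p ∈ ℂ with Re(ω) > 0. Then for t ∈ (−1/(2 Re(ω)), ∞), the curve z_k(t) = p + √(2 Re(ω) t + 1) · exp(i (Im(ω)/(2 Re(ω))) ln(2 Re(ω) t + 1)) · (w_k − p) is a trajectory of the point-vortex system with z(0) = w. -/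
/-!
The vortex velocity field is equivariant under the affine maps `w ↦ p + c (w - p)`:
it is translation invariant and homogeneous of degree `-1` with a conjugate twist,
`V(p + c (w - p)) = V(w) / c̄`. So if `V(w) = ω (w - p)`, the ansatz `z(t) = p + c(t) (w - p)`
solves the vortex equations as soon as `c' c̄ = ω`, `c(0) = 1`. With `s = 2 Re(ω) t + 1`, the
factor `c = √s · exp(i (Im ω / (2 Re ω)) log s)` satisfies `|c|² = s`, and `c' = c ω / s = ω / c̄`.
-/

open Complex ComplexConjugate

-- No condition on `c`: at `c = 0` both sides vanish, as `0⁻¹ = 0`.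
theorem vortexVelocity_affine {n : ℕ} (Γ : Fin n → ℝ) (w : Fin n → ℂ) (p c : ℂ) (k : Fin n) :
    vortexVelocity n Γ (fun j => p + c * (w j - p)) k = (conj c)⁻¹ * vortexVelocity n Γ w k := by
  have hinv : (conj c)⁻¹ = c / ((‖c‖ ^ 2 : ℝ) : ℂ) := by
    rw [inv_def, conj_conj, ← normSq_eq_norm_sq, normSq_conj, div_eq_mul_inv, ofReal_inv]
  simp only [vortexVelocity, Finset.mul_sum, hinv]
  refine Finset.sum_congr rfl fun l _ => ?_
  rw [show p + c * (w k - p) - (p + c * (w l - p)) = c * (w k - w l) by ring, norm_mul, mul_pow]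
  push_cast
  ring

noncomputable def expansionFactor (ω : ℂ) (t : ℝ) : ℂ :=
  (Real.sqrt (2 * ω.re * t + 1) : ℂ)
    * exp (I * ((ω.im / (2 * ω.re) : ℝ) : ℂ) * ((Real.log (2 * ω.re * t + 1) : ℝ) : ℂ))

theorem expansionFactor_zero (ω : ℂ) : expansionFactor ω 0 = 1 := by
  simp [expansionFactor]

theorem norm_exp_I_mul_ofReal_mul_ofReal_s16 (x y : ℝ) : ‖exp (I * x * y)‖ = 1 := by
  rw [mul_assoc, ← ofReal_mul, mul_comm]
  exact norm_exp_ofReal_mul_I _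

theorem norm_sq_expansionFactor {ω : ℂ} {t : ℝ} (ht : 0 ≤ 2 * ω.re * t + 1) :
    ‖expansionFactor ω t‖ ^ 2 = 2 * ω.re * t + 1 := by
  rw [expansionFactor, norm_mul, norm_exp_I_mul_ofReal_mul_ofReal_s16, mul_one, norm_real,
    Real.norm_of_nonneg (Real.sqrt_nonneg _), Real.sq_sqrt ht]

theorem expansionFactor_ne_zero {ω : ℂ} {t : ℝ} (ht : 0 < 2 * ω.re * t + 1) :
    expansionFactor ω t ≠ 0 := by
  intro h
  have := norm_sq_expansionFactor ht.le
  rw [h, norm_zero, sq, zero_mul] at this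
  exact this.not_lt ht

theorem conj_expansionFactor {ω : ℂ} {t : ℝ} (ht : 0 < 2 * ω.re * t + 1) :
    conj (expansionFactor ω t) = (2 * ω.re * t + 1 : ℝ) / expansionFactor ω t := by
  rw [eq_div_iff (expansionFactor_ne_zero ht), mul_comm, mul_conj, normSq_eq_norm_sq]
  exact_mod_cast norm_sq_expansionFactor ht.le

theorem hasDerivAt_expansionFactor {ω : ℂ} (hω : ω.re ≠ 0) {t : ℝ} (ht : 0 < 2 * ω.re * t + 1) :
    HasDerivAt (expansionFactor ω) (ω / conj (expansionFactor ω t)) t := by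
  have hs : HasDerivAt (fun τ : ℝ => 2 * ω.re * τ + 1) (2 * ω.re) t := by
    simpa using ((hasDerivAt_id t).const_mul (2 * ω.re)).add_const 1
  have hphase := ((hs.log ht.ne').ofReal_comp.const_mul (I * ((ω.im / (2 * ω.re) : ℝ) : ℂ))).cexp
  refine ((hs.sqrt ht.ne').ofReal_comp.mul hphase).congr_deriv ?_
  rw [conj_expansionFactor ht, div_div_eq_mul_div, expansionFactor]
  -- name the square root `r`, so that its radicand can be rewritten to `r ^ 2` elsewhere
  obtain ⟨r, hr0, hr⟩ : ∃ r : ℝ, r ≠ 0 ∧ Real.sqrt (2 * ω.re * t + 1) = r :=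
    ⟨_, (Real.sqrt_pos.2 ht).ne', rfl⟩
  have hrs : 2 * ω.re * t + 1 = r ^ 2 := by rw [← hr, Real.sq_sqrt ht.le]
  rw [hr, hrs]
  have hre : (ω.re : ℂ) ≠ 0 := ofReal_ne_zero.2 hω
  have hr0' : (r : ℂ) ≠ 0 := ofReal_ne_zero.2 hr0
  push_cast
  field_simp
  linear_combination re_add_im ω

theorem mul_add_one_pos_of_neg_one_div_lt {a t : ℝ} (ha : 0 < a) (ht : -1 / a < t) :
    0 < a * t + 1 := by
  rw [div_lt_iff₀ ha] at ht
  linarith [mul_comm t a]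

theorem expanding_configuration_trajectory_general
    (n : ℕ) (Γ : Fin n → ℝ)
    (w : Fin n → ℂ) (hw : Function.Injective w)
    (ω p : ℂ) (hre : 0 < ω.re)
    (hv : ∀ k, vortexVelocity n Γ w k = ω * (w k - p))
    (z : ℝ → Fin n → ℂ)
    (hz : ∀ t k, z t k = p + (Real.sqrt (2 * ω.re * t + 1) : ℂ)
        * Complex.exp (Complex.I * ((ω.im / (2 * ω.re) : ℝ) : ℂ)
            * ((Real.log (2 * ω.re * t + 1) : ℝ) : ℂ))
        * (w k - p)) :
    (∀ t ∈ Set.Ioi (-1 / (2 * ω.re)), Function.Injective (z t)) ∧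
    (∀ t ∈ Set.Ioi (-1 / (2 * ω.re)), ∀ k,
        HasDerivAt (fun τ => z τ k) (vortexVelocity n Γ (z t) k) t) ∧
    z 0 = w := by
  have hz' : ∀ t, z t = fun k => p + expansionFactor ω t * (w k - p) := fun t => funext (hz t)
  have hpos : ∀ t ∈ Set.Ioi (-1 / (2 * ω.re)), 0 < 2 * ω.re * t + 1 :=
    fun t ht => mul_add_one_pos_of_neg_one_div_lt (by positivity) ht
  refine ⟨fun t ht => ?_, fun t ht k => ?_, ?_⟩
  · rw [hz' t]
    exact (add_right_injective p).comp
      ((mul_right_injective₀ (expansionFactor_ne_zero (hpos t ht))).comp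
        ((sub_left_injective (b := p)).comp hw))
  · simp_rw [hz']
    rw [vortexVelocity_affine, hv k]
    exact ((hasDerivAt_expansionFactor hre.ne' (hpos t ht)).mul_const (w k - p)).const_add p
      |>.congr_deriv (by rw [div_eq_inv_mul, mul_assoc])
  · simp [hz', expansionFactor_zero]

/-- Expanding configurations evolve self-similarly for all positive time: if
`V_k(w) = ω(w_k − p)` with `Re ω > 0`, then
`z_k(t) = p + √(2 Re(ω) t + 1) exp(i (Im ω/(2 Re ω)) ln(2 Re(ω) t + 1)) (w_k − p)`
is a trajectory on `(−1/(2 Re ω), ∞)` with `z(0) = w`. -/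
theorem expanding_configuration_trajectory
    (n : ℕ) (Γ : Fin n → ℝ) (hΓ : ∀ k, Γ k ≠ 0)
    (w : Fin n → ℂ) (hw : Function.Injective w)
    (ω p : ℂ) (hre : 0 < ω.re)
    (hv : ∀ k, vortexVelocity n Γ w k = ω * (w k - p))
    (z : ℝ → Fin n → ℂ)
    (hz : ∀ t k, z t k = p + (Real.sqrt (2 * ω.re * t + 1) : ℂ)
        * Complex.exp (Complex.I * ((ω.im / (2 * ω.re) : ℝ) : ℂ)
            * ((Real.log (2 * ω.re * t + 1) : ℝ) : ℂ))
        * (w k - p)) :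
    (∀ t ∈ Set.Ioi (-1 / (2 * ω.re)), Function.Injective (z t)) ∧
    (∀ t ∈ Set.Ioi (-1 / (2 * ω.re)), ∀ k,
        HasDerivAt (fun τ => z τ k) (vortexVelocity n Γ (z t) k) t) ∧
    z 0 = w :=
  expanding_configuration_trajectory_general n Γ w hw ω p hre hv z hz
end

section
/- A self-similar configuration with linear velocity field and vanishing angular momentum has vanishing size: let w ∈ ℂ^n have pairwise distinct components and suppose V_k(w) = ω w_k for all k with ω ∈ ℂ, ω ≠ 0, and suppose L = Σ_{i<j} Γ_i Γ_j = 0. Then S(w) = Σ_k Γ_k |w_k|² = 0. -/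
open Finset ComplexConjugate

lemma Complex.conj_mul_sub_div_add_conj_mul_sub_div {a b : ℂ} (hab : a ≠ b) :
    conj a * (a - b) / ((‖a - b‖ ^ 2 : ℝ) : ℂ) + conj b * (b - a) / ((‖b - a‖ ^ 2 : ℝ) : ℂ)
      = 1 := by
  have hnorm : ((‖a - b‖ ^ 2 : ℝ) : ℂ) = conj (a - b) * (a - b) := by
    push_cast; exact (Complex.conj_mul' _).symm
  have hne : conj (a - b) * (a - b) ≠ 0 :=
    mul_ne_zero ((map_ne_zero _).mpr (sub_ne_zero.mpr hab)) (sub_ne_zero.mpr hab)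
  rw [norm_sub_rev b a, hnorm, ← add_div, div_eq_one_iff_eq hne, map_sub]
  ring

lemma sum_mul_conj_mul_vortexVelocity {n : ℕ} (Γ : Fin n → ℝ) {z : Fin n → ℂ}
    (hz : Function.Injective z) :
    ∑ k, (Γ k : ℂ) * conj (z k) * vortexVelocity n Γ z k
      = Complex.I / (2 * Real.pi) *
          ((∑ i, ∑ j ∈ univ.filter (fun j => i < j), Γ i * Γ j : ℝ) : ℂ) := by
  set f : Fin n → Fin n → ℂ := fun l k =>
    (Γ k : ℂ) * Γ l * (conj (z k) * (z k - z l) / ((‖z k - z l‖ ^ 2 : ℝ) : ℂ))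
  have hexpand : ∀ k, (Γ k : ℂ) * conj (z k) * vortexVelocity n Γ z k
      = Complex.I / (2 * Real.pi) * ∑ l ∈ {k}ᶜ, f l k := by
    intro k
    rw [vortexVelocity, mul_left_comm, mul_sum, filter_ne' univ k]
    refine congrArg _ (sum_congr (compl_singleton k).symm fun l _ => ?_)
    ring
  have hpair : ∀ k l, k < l → f l k + f k l = Γ k * Γ l := by
    intro k l hkl
    simp only [f]
    rw [mul_comm (Γ l : ℂ), ← mul_add,
      Complex.conj_mul_sub_div_add_conj_mul_sub_div (hz.ne hkl.ne), mul_one]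
  rw [sum_congr rfl fun k _ => hexpand k, ← mul_sum, ← sum_sum_Ioi_add_eq_sum_sum_off_diag f]
  simp only [← filter_lt_eq_Ioi, Complex.ofReal_sum, Complex.ofReal_mul]
  congr 1
  exact sum_congr rfl fun k _ => sum_congr rfl fun l hl => hpair k l (mem_filter.mp hl).2

theorem size_eq_zero_of_linear_velocity_general
    (n : ℕ) (Γ : Fin n → ℝ)
    (w : Fin n → ℂ) (hw : Function.Injective w)
    (ω : ℂ) (hω : ω ≠ 0)
    (hv : ∀ k, vortexVelocity n Γ w k = ω * w k)
    (hL : ∑ i, ∑ j ∈ Finset.univ.filter (fun j => i < j), Γ i * Γ j = 0) :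
    ∑ k, Γ k * ‖w k‖ ^ 2 = 0 := by
  have hvirial := sum_mul_conj_mul_vortexVelocity Γ hw
  have hsize : ∑ k, (Γ k : ℂ) * conj (w k) * vortexVelocity n Γ w k
      = ω * ((∑ k, Γ k * ‖w k‖ ^ 2 : ℝ) : ℂ) := by
    simp only [hv, Complex.ofReal_sum, Complex.ofReal_mul, Complex.ofReal_pow, mul_sum]
    refine sum_congr rfl fun k _ => ?_
    rw [← Complex.conj_mul']
    ring
  rw [hsize, hL, Complex.ofReal_zero, mul_zero] at hvirial
  exact_mod_cast (mul_eq_zero.mp hvirial).resolve_left hω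

/-- A self-similar configuration with linear velocity field (`V_k(w) = ω w_k`, `ω ≠ 0`)
and vanishing angular momentum `L = 0` has vanishing size `S(w) = 0`. -/
theorem size_eq_zero_of_linear_velocity
    (n : ℕ) (Γ : Fin n → ℝ) (hΓ : ∀ k, Γ k ≠ 0)
    (w : Fin n → ℂ) (hw : Function.Injective w)
    (ω : ℂ) (hω : ω ≠ 0)
    (hv : ∀ k, vortexVelocity n Γ w k = ω * w k)
    (hL : ∑ i, ∑ j ∈ Finset.univ.filter (fun j => i < j), Γ i * Γ j = 0) :
    ∑ k, Γ k * ‖w k‖ ^ 2 = 0 :=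
  size_eq_zero_of_linear_velocity_general n Γ w hw ω hω hv hL
end

section
/- Proportionality of all velocities to positions follows from proportionality at n−3 indices: let n ≥ 3, let w ∈ ℂ^n have pairwise distinct components, and suppose L = Σ_{i<j} Γ_i Γ_j = 0, M(w) = Σ_k Γ_k w_k = 0, S(w) = Σ_k Γ_k |w_k|² = 0, and V_1(w) w_l − V_l(w) w_1 = 0 for all indices l with 4 ≤ l ≤ n. Then V_1(w) w_l − V_l(w) w_1 = 0 for all indices l (in particular for l = 2 and l = 3). -/
/-!
Put `D l = V₀ w_l − V_l w₀`. The pair interaction is antisymmetric, so `Σ Γ_k V_k = 0`;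
symmetrising `Σ Γ_k conj(w_k) V_k` turns each pair `k ≠ l` into `Γ_k Γ_l`, so that sum is
`(i/2π) L`. With `M = S = L = 0` this gives `Σ Γ_k D_k = 0` and `Σ Γ_k conj(w_k) D_k = 0`.
As `D₀ = 0` and `D_l = 0` for `l ≥ 3`, these are two equations in `D₁, D₂` with determinant
`Γ₁ Γ₂ (conj w₂ − conj w₁) ≠ 0`.
-/

open Finset Complex ComplexConjugate Real

section DoubleSums

variable {ι M : Type*} [Fintype ι] [AddCommMonoid M]

theorem sum_sum_add_sum_sum_eq_sum_sum_add_swap (f : ι → ι → M) :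
    (∑ k, ∑ l, f k l) + ∑ k, ∑ l, f k l = ∑ k, ∑ l, (f k l + f l k) := by
  conv_lhs => enter [2]; rw [Finset.sum_comm]
  simp only [← Finset.sum_add_distrib]

theorem sum_sum_ite_eq_two_nsmul_sum_sum_lt [LinearOrder ι] {f : ι → ι → M}
    (hf : ∀ k l, f k l = f l k) :
    ∑ k, ∑ l, (if k = l then 0 else f k l)
      = 2 • ∑ k, ∑ l ∈ univ.filter (fun l => k < l), f k l := by
  have hsplit : ∀ k l, (if k = l then 0 else f k l)
      = (if k < l then f k l else 0) + (if l < k then f l k else 0) := by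
    intro k l
    rcases lt_trichotomy k l with h | rfl | h
    · simp [h, h.ne, h.not_gt]
    · simp
    · simp [h, h.ne', h.not_gt, hf k l]
  simp only [hsplit, sum_add_distrib, sum_filter, two_nsmul]
  rw [Finset.sum_comm (f := fun k l => if l < k then f l k else 0)]

end DoubleSums

theorem eq_zero_of_sum_mul_eq_zero_of_sum_mul_mul_eq_zero {ι K : Type*} [Fintype ι] [Field K]
    {c d x : ι → K} {a b : ι} (hab : a ≠ b) (hx : ∀ k, k ≠ a ∧ k ≠ b → x k = 0)
    (hca : c a ≠ 0) (hcb : c b ≠ 0) (hd : d a ≠ d b)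
    (h₁ : ∑ k, c k * x k = 0) (h₂ : ∑ k, c k * d k * x k = 0) : x = 0 := by
  rw [Fintype.sum_eq_add a b hab fun k hk => by simp [hx k hk]] at h₁ h₂
  have hxa : x a = 0 := by
    have : c a * (d a - d b) * x a = 0 := by linear_combination h₂ - d b * h₁
    simpa [hca, sub_ne_zero.mpr hd] using this
  have hxb : x b = 0 := by
    have : c b * x b = 0 := by linear_combination h₁ - c a * hxa
    simpa [hcb] using this
  funext k
  by_cases hka : k = a
  · rwa [hka]
  by_cases hkb : k = b
  · rwa [hkb]
  exact hx k ⟨hka, hkb⟩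

section VortexVelocity

variable {n : ℕ} (Γ : Fin n → ℝ) (z : Fin n → ℂ)

theorem ofReal_mul_vortexVelocity (k : Fin n) :
    (Γ k : ℂ) * vortexVelocity n Γ z k
      = I / (2 * π) * ∑ l, Γ k * Γ l * ((z k - z l) / ((‖z k - z l‖ ^ 2 : ℝ) : ℂ)) := by
  rw [vortexVelocity, sum_filter_of_ne fun l _ h => ?_, mul_left_comm, mul_sum]
  · congr 1
    refine sum_congr rfl fun l _ => ?_
    ring
  · -- the diagonal term is `0 / 0 = 0`
    rintro rfl
    simp at h

theorem sum_ofReal_mul_vortexVelocity : ∑ k, (Γ k : ℂ) * vortexVelocity n Γ z k = 0 := by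
  simp only [ofReal_mul_vortexVelocity, ← mul_sum]
  refine mul_eq_zero_of_right _ (add_self_eq_zero.mp ?_)
  rw [sum_sum_add_sum_sum_eq_sum_sum_add_swap]
  refine sum_eq_zero fun k _ => sum_eq_zero fun l _ => ?_
  rw [norm_sub_rev (z l)]
  ring

theorem sum_ofReal_mul_conj_mul_vortexVelocity (hz : Function.Injective z) :
    ∑ k, (Γ k : ℂ) * conj (z k) * vortexVelocity n Γ z k
      = I / (2 * π) * ((∑ i, ∑ j ∈ univ.filter (fun j => i < j), Γ i * Γ j : ℝ) : ℂ) := by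
  have hpair : ∀ k l, conj (z k) * (Γ k * Γ l * ((z k - z l) / ((‖z k - z l‖ ^ 2 : ℝ) : ℂ)))
      + conj (z l) * (Γ l * Γ k * ((z l - z k) / ((‖z l - z k‖ ^ 2 : ℝ) : ℂ)))
      = if k = l then 0 else (Γ k : ℂ) * Γ l := by
    intro k l
    split_ifs with hkl
    · simp [hkl]
    have hq : ((‖z k - z l‖ ^ 2 : ℝ) : ℂ) ≠ 0 := by
      exact ofReal_ne_zero.mpr (by simpa [sub_eq_zero] using hz.ne hkl)
    have hunit : (conj (z k) - conj (z l)) * (z k - z l) / ((‖z k - z l‖ ^ 2 : ℝ) : ℂ) = 1 := by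
      rw [← map_sub, conj_mul', ← ofReal_pow, div_self hq]
    rw [norm_sub_rev (z l)]
    linear_combination (Γ k : ℂ) * Γ l * hunit
  have hk : ∀ k, (Γ k : ℂ) * conj (z k) * vortexVelocity n Γ z k = I / (2 * π) *
      ∑ l, conj (z k) * (Γ k * Γ l * ((z k - z l) / ((‖z k - z l‖ ^ 2 : ℝ) : ℂ))) := by
    intro k
    rw [mul_right_comm, ofReal_mul_vortexVelocity, mul_comm, mul_left_comm, mul_sum]
  simp only [hk]
  rw [← mul_sum]
  congr 1
  refine mul_left_cancel₀ (two_ne_zero' ℂ) ?_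
  rw [two_mul, sum_sum_add_sum_sum_eq_sum_sum_add_swap]
  simp only [hpair]
  rw [sum_sum_ite_eq_two_nsmul_sum_sum_lt fun k l => mul_comm _ _, two_nsmul, two_mul]
  push_cast
  rfl

theorem sum_ofReal_mul_velocity_cross_eq_zero (hM : ∑ k, (Γ k : ℂ) * z k = 0) (i : Fin n) :
    ∑ k, (Γ k : ℂ) * (vortexVelocity n Γ z i * z k - vortexVelocity n Γ z k * z i) = 0 := by
  have h : ∑ k, (Γ k : ℂ) * (vortexVelocity n Γ z i * z k - vortexVelocity n Γ z k * z i)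
      = vortexVelocity n Γ z i * ∑ k, (Γ k : ℂ) * z k
        - z i * ∑ k, (Γ k : ℂ) * vortexVelocity n Γ z k := by
    simp only [mul_sum, ← sum_sub_distrib]
    exact sum_congr rfl fun k _ => by ring
  rw [h, hM, sum_ofReal_mul_vortexVelocity]
  ring

theorem sum_ofReal_mul_conj_mul_velocity_cross_eq_zero (hz : Function.Injective z)
    (hL : ∑ i, ∑ j ∈ univ.filter (fun j => i < j), Γ i * Γ j = 0)
    (hS : ∑ k, Γ k * ‖z k‖ ^ 2 = 0) (i : Fin n) :
    ∑ k, (Γ k : ℂ) * conj (z k) *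
      (vortexVelocity n Γ z i * z k - vortexVelocity n Γ z k * z i) = 0 := by
  have h : ∑ k, (Γ k : ℂ) * conj (z k) *
        (vortexVelocity n Γ z i * z k - vortexVelocity n Γ z k * z i)
      = vortexVelocity n Γ z i * ∑ k, (Γ k : ℂ) * conj (z k) * z k
        - z i * ∑ k, (Γ k : ℂ) * conj (z k) * vortexVelocity n Γ z k := by
    simp only [mul_sum, ← sum_sub_distrib]
    exact sum_congr rfl fun k _ => by ring
  have hS' : ∑ k, (Γ k : ℂ) * conj (z k) * z k = 0 := by
    simp only [mul_assoc, conj_mul']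
    exact_mod_cast hS
  rw [h, hS', sum_ofReal_mul_conj_mul_vortexVelocity Γ z hz, hL]
  simp

end VortexVelocity

/-- Proportionality of all velocities to positions follows from proportionality at the
`n − 3` indices `l = 4, ..., n` (here 0-indexed: `3 ≤ l`), given `L = 0`, `M(w) = 0` and
`S(w) = 0`. The first vortex plays the role of the fixed index `k = 1` (0-indexed `0`). -/
theorem proportionality_extends
    (n : ℕ) (hn : 3 ≤ n) (Γ : Fin n → ℝ) (hΓ : ∀ k, Γ k ≠ 0)
    (w : Fin n → ℂ) (hw : Function.Injective w)
    (hL : ∑ i, ∑ j ∈ Finset.univ.filter (fun j => i < j), Γ i * Γ j = 0)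
    (hM : ∑ k, (Γ k : ℂ) * w k = 0)
    (hS : ∑ k, Γ k * ‖w k‖ ^ 2 = 0)
    (hD : ∀ l : Fin n, 3 ≤ (l : ℕ) →
        vortexVelocity n Γ w ⟨0, by omega⟩ * w l
          - vortexVelocity n Γ w l * w ⟨0, by omega⟩ = 0) :
    ∀ l : Fin n,
        vortexVelocity n Γ w ⟨0, by omega⟩ * w l
          - vortexVelocity n Γ w l * w ⟨0, by omega⟩ = 0 := by
  set i₀ : Fin n := ⟨0, by omega⟩
  set D : Fin n → ℂ := fun l => vortexVelocity n Γ w i₀ * w l - vortexVelocity n Γ w l * w i₀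
  have hΓD : ∑ k, (Γ k : ℂ) * D k = 0 := sum_ofReal_mul_velocity_cross_eq_zero Γ w hM i₀
  have hΓconjD : ∑ k, (Γ k : ℂ) * conj (w k) * D k = 0 :=
    sum_ofReal_mul_conj_mul_velocity_cross_eq_zero Γ w hw hL hS i₀
  have hD0 : D = 0 := by
    refine eq_zero_of_sum_mul_eq_zero_of_sum_mul_mul_eq_zero (d := fun k => conj (w k))
      (a := ⟨1, by omega⟩) (b := ⟨2, by omega⟩) (by simp) (fun k hk => ?_)
      (ofReal_ne_zero.mpr (hΓ _)) (ofReal_ne_zero.mpr (hΓ _))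
      ((RingHom.injective _).ne (hw.ne (by simp))) hΓD hΓconjD
    by_cases hk3 : 3 ≤ (k : ℕ)
    · exact hD k hk3
    · have hk0 : k = i₀ := by
        simp only [ne_eq, Fin.ext_iff, i₀] at hk ⊢
        omega
      simp only [D, hk0, sub_self]
  exact fun l => congrFun hD0 l
end
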